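/- Let f be a nonzero Laurent polynomial in n complex variables with zero set V_f = {z ∈ (ℂ*)^n : f(z) = 0}, and let 𝒜 = Log(V_f) ⊆ ℝ^n be its amoeba. Then every connected component of the complement ℝ^n \ 𝒜 is a convex set. -/

import Mathlib

/-!
Fix an integer direction `k` and phases `u`. Restricted to the monomial curve
`w ↦ polarPoint y u * w ^ k`, the Laurent polynomial becomes, after clearing negative powers, a
polynomial `P_y` whose roots on the circle `‖w‖ = exp t` come from points of the amoeba on the
line `y + t • k`. On a component `E` of the complement no root of `P_y` lies on the unit circle,
so by the argument principle the number of roots of `P_y` in the unit disc is the same for all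
`y ∈ E`. As `P_(y + r • k)` is `P_y (exp r * w)` up to a constant, that number at `y + r • k`
counts the roots of `P_y` in the disc of radius `exp r`; a point of the amoeba on the segment
from `y` to `y + r • k` would put a root in the annulus between the two circles. Hence `E`
contains the segments in integer directions between its points, and such an open set is convex.
-/

open Polynomial Metric Set Real

theorem circleIntegral_sub_inv_of_norm_ne {ρ : ℂ} {R : ℝ} (hR : 0 < R) (hρ : ‖ρ‖ ≠ R) :
    (∮ z in C(0, R), (z - ρ)⁻¹) = if ‖ρ‖ < R then 2 * π * Complex.I else 0 := by
  split_ifs with hlt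
  · exact circleIntegral.integral_sub_inv_of_mem_ball (mem_ball_zero_iff.mpr hlt)
  · have hne : ∀ z ∈ closedBall (0 : ℂ) R, z - ρ ≠ 0 := fun z hz h => by
      rw [sub_eq_zero.mp h, mem_closedBall_zero_iff] at hz
      exact hρ (le_antisymm hz (not_lt.mp hlt))
    exact Complex.circleIntegral_eq_zero_of_differentiable_on_off_countable hR.le countable_empty
      ((continuousOn_id.sub continuousOn_const).inv₀ hne)
      fun z hz => (differentiableAt_id.sub_const ρ).inv (hne z (ball_subset_closedBall hz.1))

theorem circleIntegral_multiset_sum_one_div_sub {t : Multiset ℂ} {R : ℝ} (hR : 0 < R)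
    (ht : ∀ ρ ∈ t, ‖ρ‖ ≠ R) :
    CircleIntegrable (fun z => (t.map fun ρ => 1 / (z - ρ)).sum) 0 R ∧
      (∮ z in C(0, R), (t.map fun ρ => 1 / (z - ρ)).sum) =
        2 * π * Complex.I * (t.filter fun ρ => ‖ρ‖ < R).card := by
  induction t using Multiset.induction with
  | empty => simp [circleIntegral]
  | cons ρ t ih =>
    obtain ⟨hint, hval⟩ := ih fun σ hσ => ht σ (Multiset.mem_cons_of_mem hσ)
    have hρ : ‖ρ‖ ≠ R := ht ρ (Multiset.mem_cons_self ρ t)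
    have hρint : CircleIntegrable (fun z => 1 / (z - ρ)) 0 R := by
      simpa only [one_div, circleIntegrable_sub_inv_iff, mem_sphere_zero_iff_norm,
        abs_of_pos hR] using Or.inr hρ
    simp only [Multiset.map_cons, Multiset.sum_cons]
    refine ⟨hρint.add hint, ?_⟩
    rw [circleIntegral.integral_add hρint hint, hval]
    simp only [one_div]
    rw [circleIntegral_sub_inv_of_norm_ne hR hρ, Multiset.filter_cons]
    split_ifs <;> simp; ring

theorem Polynomial.circleIntegral_derivative_div_eq {P : ℂ[X]} {R : ℝ} (hR : 0 < R)
    (hP : ∀ w : ℂ, ‖w‖ = R → P.eval w ≠ 0) :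
    (∮ z in C(0, R), P.derivative.eval z / P.eval z) =
      2 * π * Complex.I * (P.roots.filter fun ρ => ‖ρ‖ < R).card := by
  have hsphere : EqOn (fun z => P.derivative.eval z / P.eval z)
      (fun z => (P.roots.map fun ρ => 1 / (z - ρ)).sum) (sphere 0 R) := fun z hz =>
    (IsAlgClosed.splits P).eval_derivative_div_eval_of_ne_zero
      (hP z (mem_sphere_zero_iff_norm.mp hz))
  rw [circleIntegral.integral_congr hR.le hsphere]
  exact (circleIntegral_multiset_sum_one_div_sub hR fun ρ hρ hρR =>
    hP ρ hρR (isRoot_of_mem_roots hρ)).2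

section ContinuousFamily

variable {X R : Type*} [TopologicalSpace X] [Semiring R] [TopologicalSpace R]
  [IsTopologicalSemiring R] {P : X → R[X]} {d : ℕ}

theorem Polynomial.continuous_eval_of_continuous_coeff (hd : ∀ x, (P x).natDegree ≤ d)
    (hc : ∀ i, Continuous fun x => (P x).coeff i) :
    Continuous fun p : X × R => (P p.1).eval p.2 := by
  simp only [eval_eq_sum_range' (Nat.lt_succ_of_le (hd _))]
  exact continuous_finsetSum _ fun i _ => ((hc i).comp continuous_fst).mul (continuous_snd.pow i)

theorem Polynomial.continuous_eval_derivative_of_continuous_coeff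
    (hd : ∀ x, (P x).natDegree ≤ d) (hc : ∀ i, Continuous fun x => (P x).coeff i) :
    Continuous fun p : X × R => (P p.1).derivative.eval p.2 :=
  continuous_eval_of_continuous_coeff
    (fun x => (natDegree_derivative_le _).trans ((Nat.sub_le _ _).trans (hd x)))
    fun i => by simp only [coeff_derivative]; fun_prop

end ContinuousFamily

theorem Polynomial.card_roots_norm_lt_eq_of_preconnectedSpace {X : Type*} [TopologicalSpace X]
    [PreconnectedSpace X] {P : X → ℂ[X]} {d : ℕ} (hd : ∀ x, (P x).natDegree ≤ d)
    (hc : ∀ i, Continuous fun x => (P x).coeff i) {R : ℝ} (hR : 0 < R)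
    (hP : ∀ x w, ‖w‖ = R → (P x).eval w ≠ 0) (x y : X) :
    ((P x).roots.filter fun ρ => ‖ρ‖ < R).card = ((P y).roots.filter fun ρ => ‖ρ‖ < R).card := by
  have hint : Continuous fun x => ∮ z in C(0, R), (P x).derivative.eval z / (P x).eval z := by
    simp only [circleIntegral, deriv_circleMap]
    refine intervalIntegral.continuous_parametric_intervalIntegral_of_continuous' ?_ _ _
    have hcirc : Continuous fun p : X × ℝ => circleMap 0 R p.2 :=
      (continuous_circleMap 0 R).comp continuous_snd
    refine (hcirc.mul continuous_const).smul
      (((continuous_eval_derivative_of_continuous_coeff hd hc).comp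
        (continuous_fst.prodMk hcirc)).div
      ((continuous_eval_of_continuous_coeff hd hc).comp (continuous_fst.prodMk hcirc)) ?_)
    exact fun p => hP _ _ (by simp [abs_of_pos hR])
  have hcount : Continuous fun x => ((P x).roots.filter fun ρ => ‖ρ‖ < R).card := by
    have hemb : Topology.IsEmbedding (Nat.cast : ℕ → ℂ) :=
      Complex.isometry_ofReal.isEmbedding.comp Nat.isClosedEmbedding_coe_real.isEmbedding
    refine hemb.continuous_iff.mpr ?_
    convert (continuous_const (y := (2 * π * Complex.I)⁻¹)).mul hint using 1
    funext x
    rw [Function.comp_apply, Pi.mul_apply, circleIntegral_derivative_div_eq hR (hP x),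
      inv_mul_cancel_left₀ (by simp [pi_ne_zero])]
  exact PreconnectedSpace.constant inferInstance hcount

theorem Polynomial.card_roots_comp_C_mul_X_filter_norm_lt (P : ℂ[X]) {c : ℂ} (hc : c ≠ 0)
    (R : ℝ) :
    ((P.comp (C c * X)).roots.filter fun ρ => ‖ρ‖ < R).card =
      (P.roots.filter fun ρ => ‖ρ‖ < ‖c‖ * R).card := by
  have h := roots_comp_C_mul_X_add_C P c 0 (Ne.isUnit hc)
  rw [C_0, add_zero] at h
  rw [h, Multiset.filter_map, Multiset.card_map]
  congr 2
  funext ρ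
  rw [Function.comp_apply, sub_zero, Ring.inverse_eq_inv', norm_mul, norm_inv,
    inv_mul_lt_iff₀ (norm_pos_iff.mpr hc)]

theorem Multiset.card_filter_lt_card_filter {α : Type*} {t : Multiset α} {p q : α → Prop}
    [DecidablePred p] [DecidablePred q] (hpq : ∀ x, p x → q x) {x : α} (hx : x ∈ t)
    (hqx : q x) (hpx : ¬ p x) : (t.filter p).card < (t.filter q).card :=
  Multiset.card_lt_card <| lt_of_le_of_ne (Multiset.monotone_filter_right t hpq) fun h =>
    hpx (Multiset.of_mem_filter (h ▸ Multiset.mem_filter.mpr ⟨hx, hqx⟩))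

theorem prod_zpow_eq_zpow_sum {ι G₀ : Type*} [CommGroupWithZero G₀] {c : G₀} (hc : c ≠ 0)
    (s : Finset ι) (m : ι → ℤ) : ∏ i ∈ s, c ^ m i = c ^ ∑ i ∈ s, m i := by
  classical
  induction s using Finset.induction with
  | empty => simp
  | insert i s hi ih => rw [Finset.prod_insert hi, Finset.sum_insert hi, zpow_add₀ hc, ih]

theorem convex_of_segment_add_subset {E : Type*} [NormedAddCommGroup E] [NormedSpace ℝ E]
    {S D : Set E} (hS : IsOpen S) (hD : Dense D)
    (h : ∀ x ∈ S, ∀ v ∈ D, x + v ∈ S → segment ℝ x (x + v) ⊆ S) : Convex ℝ S := by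
  refine convex_iff_segment_subset.mpr fun x hx y hy p hp => ?_
  obtain ⟨εx, hεx, hbx⟩ := isOpen_iff.mp hS x hx
  obtain ⟨εy, hεy, hby⟩ := isOpen_iff.mp hS y hy
  obtain ⟨v, hv, hvε⟩ := hD.exists_dist_lt (y - x) (lt_min hεx hεy)
  rw [segment_eq_image'] at hp
  obtain ⟨θ, hθ, rfl⟩ := hp
  -- Perturb the segment `[x, y]` to a parallel one `[x', x' + v]` through `p` in direction `v`.
  set e := y - x - v
  have he : ‖e‖ < min εx εy := by rwa [← dist_eq_norm]
  have hx' : x + θ • e ∈ S := hbx <| by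
    rw [mem_ball, dist_self_add_left, norm_smul, Real.norm_of_nonneg hθ.1]
    exact (mul_le_of_le_one_left (norm_nonneg e) hθ.2).trans_lt (he.trans_le (min_le_left _ _))
  have hy' : x + θ • e + v ∈ S := hby <| by
    have : x + θ • e + v = y + (-(1 - θ)) • e := by simp only [e]; module
    rw [this, mem_ball, dist_self_add_left, norm_smul, Real.norm_eq_abs, abs_neg,
      abs_of_nonneg (sub_nonneg.mpr hθ.2)]
    exact (mul_le_of_le_one_left (norm_nonneg e) (by linarith [hθ.1])).trans_lt
      (he.trans_le (min_le_right _ _))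
  refine h _ hx' v hv hy' ?_
  rw [segment_eq_image']
  exact ⟨θ, hθ, by simp only [e]; module⟩

theorem dense_nonneg_smul_intCast {ι : Type*} [Fintype ι] :
    Dense {v : ι → ℝ | ∃ r : ℝ, 0 ≤ r ∧ ∃ k : ι → ℤ, r • (Int.cast ∘ k) = v} := by
  refine Metric.dense_iff.mpr fun u ε hε => ?_
  obtain ⟨N, hN⟩ := exists_nat_one_div_lt hε
  have hN0 : (0 : ℝ) < N + 1 := by positivity
  refine ⟨(1 / (N + 1 : ℝ)) • (Int.cast ∘ fun i => round ((N + 1 : ℝ) * u i)),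
    ?_, _, by positivity, _, rfl⟩
  rw [mem_ball, dist_pi_lt_iff hε]
  intro i
  rw [Real.dist_eq, abs_sub_comm]
  simp only [Pi.smul_apply, Function.comp_apply, smul_eq_mul]
  calc |u i - (1 / (N + 1 : ℝ)) * round ((N + 1 : ℝ) * u i)|
      = |1 / (N + 1 : ℝ) * ((N + 1 : ℝ) * u i - round ((N + 1 : ℝ) * u i))| := by
        congr 1; field_simp
    _ = 1 / (N + 1 : ℝ) * |(N + 1 : ℝ) * u i - round ((N + 1 : ℝ) * u i)| := by
        rw [abs_mul, abs_of_pos (one_div_pos.mpr hN0)]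
    _ ≤ 1 / (N + 1 : ℝ) * (1 / 2) := by gcongr; exact abs_sub_round _
    _ < ε := by nlinarith [one_div_pos.mpr hN0]

namespace Amoeba

variable {n : ℕ}

noncomputable def laurentEval (A : Finset (Fin n → ℤ)) (a : (Fin n → ℤ) → ℂ) (z : Fin n → ℂ) :
    ℂ :=
  ∑ α ∈ A, a α * ∏ i, z i ^ α i

def amoebaOf (A : Finset (Fin n → ℤ)) (a : (Fin n → ℤ) → ℂ) : Set (Fin n → ℝ) :=
  (fun z : Fin n → ℂ => fun i => Real.log ‖z i‖) '' {z | (∀ i, z i ≠ 0) ∧ laurentEval A a z = 0}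

noncomputable def polarPoint (y : Fin n → ℝ) (u : Fin n → Circle) : Fin n → ℂ :=
  fun j => (Real.exp (y j) : ℂ) * u j

variable {A : Finset (Fin n → ℤ)} {a : (Fin n → ℤ) → ℂ}

theorem polarPoint_ne_zero (y : Fin n → ℝ) (u : Fin n → Circle) (j : Fin n) :
    polarPoint y u j ≠ 0 :=
  mul_ne_zero (Complex.ofReal_ne_zero.mpr (Real.exp_pos _).ne') (Circle.coe_ne_zero _)

theorem norm_polarPoint (y : Fin n → ℝ) (u : Fin n → Circle) (j : Fin n) :
    ‖polarPoint y u j‖ = Real.exp (y j) := by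
  simp [polarPoint, Circle.norm_coe]

theorem continuous_polarPoint :
    Continuous fun p : (Fin n → ℝ) × (Fin n → Circle) => polarPoint p.1 p.2 :=
  continuous_pi fun j => (Complex.continuous_ofReal.comp (Real.continuous_exp.comp
    ((continuous_apply j).comp continuous_fst))).mul
    (continuous_subtype_val.comp ((continuous_apply j).comp continuous_snd))

theorem mem_amoebaOf_iff {y : Fin n → ℝ} :
    y ∈ amoebaOf A a ↔ ∃ u : Fin n → Circle, laurentEval A a (polarPoint y u) = 0 := by
  constructor
  · rintro ⟨z, ⟨hz0, hz⟩, rfl⟩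
    refine ⟨fun j => Circle.exp (z j).arg, ?_⟩
    convert hz using 2
    funext j
    simp only [polarPoint, Circle.coe_exp, Real.exp_log (norm_pos_iff.mpr (hz0 j))]
    exact Complex.norm_mul_exp_arg_mul_I (z j)
  · rintro ⟨u, hu⟩
    exact ⟨polarPoint y u, ⟨polarPoint_ne_zero y u, hu⟩,
      funext fun j => by simp only [norm_polarPoint, Real.log_exp]⟩

theorem continuous_prod_zpow {X : Type*} [TopologicalSpace X] {z : X → Fin n → ℂ}
    (hz : Continuous z) (hz0 : ∀ x j, z x j ≠ 0) (α : Fin n → ℤ) :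
    Continuous fun x => ∏ j, z x j ^ α j :=
  continuous_finsetProd _ fun j _ =>
    ((continuous_apply j).comp hz).zpow₀ _ fun x => Or.inl (hz0 x j)

theorem isClosed_amoebaOf : IsClosed (amoebaOf A a) := by
  have hzero : IsClosed {p : (Fin n → ℝ) × (Fin n → Circle) |
      laurentEval A a (polarPoint p.1 p.2) = 0} :=
    isClosed_eq (continuous_finsetSum _ fun α _ => continuous_const.mul
      (continuous_prod_zpow continuous_polarPoint (fun p => polarPoint_ne_zero p.1 p.2) α))
      continuous_const
  convert isClosedMap_fst_of_compactSpace _ hzero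
  ext y
  simp [mem_amoebaOf_iff]

section Slice

variable (A a) (k : Fin n → ℤ)

/-- Makes `∑ i, k i * α i + sliceShift A k` nonnegative for `α ∈ A`, so `sliceExp` loses nothing
to `Int.toNat`. -/
def sliceShift : ℕ := A.sup fun α => (-∑ i, k i * α i).toNat

def sliceExp (α : Fin n → ℤ) : ℕ := (∑ i, k i * α i + sliceShift A k).toNat

noncomputable def slicePoly (z : Fin n → ℂ) : ℂ[X] :=
  ∑ α ∈ A, C (a α * ∏ j, z j ^ α j) * X ^ sliceExp A k α

variable {A a k}

theorem sliceExp_cast {α : Fin n → ℤ} (hα : α ∈ A) :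
    (sliceExp A k α : ℤ) = ∑ i, k i * α i + sliceShift A k := by
  have hle : (-∑ i, k i * α i).toNat ≤ sliceShift A k :=
    Finset.le_sup (f := fun α => (-∑ i, k i * α i).toNat) hα
  rw [sliceExp, Int.toNat_of_nonneg (by omega)]

theorem slicePoly_comp_C_mul_X (z : Fin n → ℂ) {c : ℂ} (hc : c ≠ 0) :
    (slicePoly A a k z).comp (C c * X) =
      C (c ^ sliceShift A k) * slicePoly A a k (fun j => z j * c ^ k j) := by
  simp only [slicePoly, sum_comp, mul_comp, C_comp, X_pow_comp, mul_pow, ← C_pow,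
    Finset.mul_sum]
  refine Finset.sum_congr rfl fun α hα => ?_
  have hexp : c ^ sliceExp A k α = c ^ sliceShift A k * ∏ j, c ^ (k j * α j) := by
    rw [prod_zpow_eq_zpow_sum hc, ← zpow_natCast, sliceExp_cast hα, zpow_add₀ hc, zpow_natCast,
      mul_comm]
  simp only [mul_zpow, ← zpow_mul, Finset.prod_mul_distrib, hexp, C_mul]
  ring

theorem eval_one_slicePoly (z : Fin n → ℂ) : (slicePoly A a k z).eval 1 = laurentEval A a z := by
  simp [slicePoly, laurentEval, eval_finsetSum, eval_prod]

theorem eval_slicePoly (z : Fin n → ℂ) {w : ℂ} (hw : w ≠ 0) :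
    (slicePoly A a k z).eval w =
      w ^ sliceShift A k * laurentEval A a (fun j => z j * w ^ k j) := by
  have h := congrArg (eval 1) (slicePoly_comp_C_mul_X (A := A) (a := a) (k := k) z hw)
  simpa [eval_comp, eval_one_slicePoly] using h

theorem natDegree_slicePoly_le (z : Fin n → ℂ) :
    (slicePoly A a k z).natDegree ≤ A.sup (sliceExp A k) :=
  natDegree_sum_le_of_forall_le _ _ fun _ hα =>
    (natDegree_C_mul_X_pow_le _ _).trans (Finset.le_sup hα)

theorem continuous_coeff_slicePoly {X : Type*} [TopologicalSpace X] {z : X → Fin n → ℂ}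
    (hz : Continuous z) (hz0 : ∀ x j, z x j ≠ 0) (i : ℕ) :
    Continuous fun x => (slicePoly A a k (z x)).coeff i := by
  simp only [slicePoly, finsetSum_coeff, coeff_C_mul_X_pow]
  refine continuous_finsetSum _ fun α _ => ?_
  split_ifs
  · exact continuous_const.mul (continuous_prod_zpow hz hz0 α)
  · exact continuous_const

end Slice

theorem polarPoint_mul_exp_zpow (y : Fin n → ℝ) (u : Fin n → Circle) (k : Fin n → ℤ) (t : ℝ) :
    (fun j => polarPoint y u j * (Real.exp t : ℂ) ^ k j) =
      polarPoint (y + t • (Int.cast ∘ k)) u := by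
  funext j
  simp only [polarPoint, Pi.add_apply, Pi.smul_apply, Function.comp_apply, smul_eq_mul,
    Real.exp_add, Real.exp_mul, Real.rpow_intCast, Complex.ofReal_mul, Complex.ofReal_zpow]
  ring

theorem polarPoint_mul_circle_zpow (y : Fin n → ℝ) (u : Fin n → Circle) (k : Fin n → ℤ)
    (v : Circle) :
    (fun j => polarPoint y u j * (v : ℂ) ^ k j) = polarPoint y (fun j => u j * v ^ k j) := by
  funext j
  simp only [polarPoint, Circle.coe_mul, Circle.coe_zpow]
  ring

theorem eval_slicePoly_polarPoint_ne_zero {y : Fin n → ℝ} (hy : y ∉ amoebaOf A a)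
    (k : Fin n → ℤ) (u : Fin n → Circle) {w : ℂ} (hw : ‖w‖ = 1) :
    (slicePoly A a k (polarPoint y u)).eval w ≠ 0 := by
  have hw0 : w ≠ 0 := norm_ne_zero_iff.mp (by rw [hw]; exact one_ne_zero)
  let v : Circle := ⟨w, mem_sphere_zero_iff_norm.mpr hw⟩
  rw [eval_slicePoly _ hw0, show w = v from rfl, polarPoint_mul_circle_zpow]
  exact mul_ne_zero (pow_ne_zero _ hw0) fun h => hy (mem_amoebaOf_iff.mpr ⟨_, h⟩)

theorem isRoot_slicePoly_polarPoint {y : Fin n → ℝ} {k : Fin n → ℤ} {u : Fin n → Circle}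
    {t : ℝ} (hu : laurentEval A a (polarPoint (y + t • (Int.cast ∘ k)) u) = 0) :
    (slicePoly A a k (polarPoint y u)).IsRoot (Real.exp t) := by
  rw [IsRoot, eval_slicePoly _ (Complex.ofReal_ne_zero.mpr (Real.exp_pos t).ne'),
    polarPoint_mul_exp_zpow, hu, mul_zero]

theorem card_roots_slicePoly_polarPoint_add_smul (y : Fin n → ℝ) (k : Fin n → ℤ)
    (u : Fin n → Circle) (t : ℝ) :
    ((slicePoly A a k (polarPoint (y + t • (Int.cast ∘ k)) u)).roots.filter
        fun ρ => ‖ρ‖ < 1).card =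
      ((slicePoly A a k (polarPoint y u)).roots.filter fun ρ => ‖ρ‖ < Real.exp t).card := by
  have hc : (Real.exp t : ℂ) ≠ 0 := Complex.ofReal_ne_zero.mpr (Real.exp_pos t).ne'
  rw [← polarPoint_mul_exp_zpow, ← roots_C_mul _ (pow_ne_zero (sliceShift A k) hc),
    ← slicePoly_comp_C_mul_X _ hc, card_roots_comp_C_mul_X_filter_norm_lt _ hc,
    Complex.norm_real, Real.norm_of_nonneg (Real.exp_pos t).le, mul_one]

theorem add_smul_notMem_amoebaOf {x : Fin n → ℝ} {k : Fin n → ℤ} {r s : ℝ}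
    (hx : x ∉ amoebaOf A a)
    (hr : x + r • (Int.cast ∘ k) ∈ connectedComponentIn (amoebaOf A a)ᶜ x)
    (hs : s ∈ Icc 0 r) : x + s • (Int.cast ∘ k) ∉ amoebaOf A a := by
  set E := connectedComponentIn (amoebaOf A a)ᶜ x
  have hE : ∀ y ∈ E, y ∉ amoebaOf A a := fun y hy => connectedComponentIn_subset _ _ hy
  intro hmem
  obtain ⟨u, hu⟩ := mem_amoebaOf_iff.mp hmem
  set P : (Fin n → ℝ) → ℂ[X] := fun y => slicePoly A a k (polarPoint y u)
  rcases hs.1.eq_or_lt with rfl | hs0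
  · exact hx (by simpa using hmem)
  rcases hs.2.eq_or_lt with rfl | hsr
  · exact hE _ hr hmem
  have hconst : ((P x).roots.filter fun ρ => ‖ρ‖ < 1).card =
      ((P (x + r • (Int.cast ∘ k))).roots.filter fun ρ => ‖ρ‖ < 1).card := by
    have := isPreconnected_iff_preconnectedSpace.mp
      (isPreconnected_connectedComponentIn (F := (amoebaOf A a)ᶜ) (x := x))
    exact card_roots_norm_lt_eq_of_preconnectedSpace (P := fun y : E => P y)
      (fun _ => natDegree_slicePoly_le _)
      (continuous_coeff_slicePoly (continuous_polarPoint.comp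
        (continuous_subtype_val.prodMk continuous_const)) fun y => polarPoint_ne_zero y.1 u)
      one_pos (fun y _ => eval_slicePoly_polarPoint_ne_zero (hE y y.2) k u)
      ⟨x, mem_connectedComponentIn hx⟩ ⟨_, hr⟩
  have hPx : P x ≠ 0 := fun h =>
    eval_slicePoly_polarPoint_ne_zero hx k u norm_one ((congrArg (eval 1) h).trans eval_zero)
  have hroot : (Real.exp s : ℂ) ∈ (P x).roots :=
    (mem_roots hPx).mpr (isRoot_slicePoly_polarPoint hu)
  have hnorm : ‖(Real.exp s : ℂ)‖ = Real.exp s := by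
    rw [Complex.norm_real, Real.norm_of_nonneg (Real.exp_pos s).le]
  refine (Multiset.card_filter_lt_card_filter (fun ρ (h : ‖ρ‖ < 1) =>
      h.trans (Real.one_lt_exp_iff.mpr (hs0.trans hsr))) hroot ?_ ?_).ne ?_
  · rw [hnorm]; exact Real.exp_lt_exp.mpr hsr
  · rw [hnorm, not_lt]; exact (Real.one_lt_exp_iff.mpr hs0).le
  · rw [hconst, card_roots_slicePoly_polarPoint_add_smul]

theorem segment_subset_compl_amoebaOf {x : Fin n → ℝ} {k : Fin n → ℤ} {r : ℝ} (hr : 0 ≤ r)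
    (hx : x ∉ amoebaOf A a)
    (hxr : x + r • (Int.cast ∘ k) ∈ connectedComponentIn (amoebaOf A a)ᶜ x) :
    segment ℝ x (x + r • (Int.cast ∘ k)) ⊆ (amoebaOf A a)ᶜ := by
  rw [segment_eq_image']
  rintro _ ⟨θ, hθ, rfl⟩
  simp only [add_sub_cancel_left, smul_smul]
  exact add_smul_notMem_amoebaOf hx hxr
    ⟨mul_nonneg hθ.1 hr, mul_le_of_le_one_left hr hθ.2⟩

theorem convex_connectedComponentIn_compl_amoebaOf (A : Finset (Fin n → ℤ))
    (a : (Fin n → ℤ) → ℂ) (x : Fin n → ℝ) :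
    Convex ℝ (connectedComponentIn (amoebaOf A a)ᶜ x) := by
  refine convex_of_segment_add_subset isClosed_amoebaOf.isOpen_compl.connectedComponentIn
    dense_nonneg_smul_intCast ?_
  rintro y hy _ ⟨r, hr, k, rfl⟩ hyr
  rw [connectedComponentIn_eq hy] at hyr ⊢
  have hy' : y ∉ amoebaOf A a := connectedComponentIn_subset _ _ hy
  exact (convex_segment _ _).isPreconnected.subset_connectedComponentIn
    (left_mem_segment ℝ _ _) (segment_subset_compl_amoebaOf hr hy' hyr)

end Amoeba

open Amoeba in
theorem amoeba_complement_components_convex_general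
    (n : ℕ) (A : Finset (Fin n → ℤ))
    (a : (Fin n → ℤ) → ℂ)
    (V : Set (Fin n → ℂ))
    (hV : V = {z | (∀ i, z i ≠ 0) ∧ ∑ α ∈ A, a α * ∏ i, z i ^ (α i) = 0})
    (amoeba : Set (Fin n → ℝ))
    (hamoeba : amoeba = (fun z : Fin n → ℂ => fun i => Real.log ‖z i‖) '' V) :
    ∀ x ∈ amoebaᶜ, Convex ℝ (connectedComponentIn amoebaᶜ x) := by
  subst hV hamoeba
  exact fun x _ => convex_connectedComponentIn_compl_amoebaOf A a x

/-- Forsberg–Passare–Tsikh (convexity part): every connected component of the complement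
of the amoeba of a complex algebraic hypersurface (zero set of a nonzero Laurent
polynomial in `(ℂ*)ⁿ`) is convex. -/
theorem amoeba_complement_components_convex
    (n : ℕ) (A : Finset (Fin n → ℤ)) (hA : A.Nonempty)
    (a : (Fin n → ℤ) → ℂ) (ha : ∀ α ∈ A, a α ≠ 0)
    (V : Set (Fin n → ℂ))
    (hV : V = {z | (∀ i, z i ≠ 0) ∧ ∑ α ∈ A, a α * ∏ i, z i ^ (α i) = 0})
    (amoeba : Set (Fin n → ℝ))
    (hamoeba : amoeba = (fun z : Fin n → ℂ => fun i => Real.log ‖z i‖) '' V) :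
    ∀ x ∈ amoebaᶜ, Convex ℝ (connectedComponentIn amoebaᶜ x) :=
  amoeba_complement_components_convex_general n A a V hV amoeba hamoeba
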